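/- arXiv:1909.05959 — 5 statements merged into one kernel-verified Lean document; each statement's English description precedes it below -/
import Mathlib

section
/- (Full-state feedback L2-gain bound.) Let Z be a real Hilbert space, X a linear subspace of Z, A : X → Z a linear map, B₁ : ℝ^r → Z and B₂ : ℝ^m → Z continuous linear maps, C₁ : X → ℝ^p and H : X → ℝ^m linear maps, and D₁ : ℝ^r → ℝ^p, D₂ : ℝ^m → ℝ^p linear maps. Let P₁ : Z → Z be a continuous linear operator that is self-adjoint, coercive, maps X into X with P₁(X) = X (so that by the inverse theorem P₁⁻¹ exists, is continuous, coercive, self-adjoint, and maps X into X). Suppose there exist scalars ε₁ > 0 and γ₁ > 0 such that for all h ∈ X, ω ∈ ℝ^r, and υ ∈ ℝ^p: 2⟨A(P₁h) + B₂(Hh) + B₁ω, h⟩ − γ₁‖ω‖² − γ₁‖υ‖² + 2υᵀ(C₁(P₁h) + D₂(Hh) + D₁ω) ≤ −ε₁‖h‖². Let ω : [0,∞) → ℝ^r be continuous, and let x : [0,∞) → Z be continuously differentiable with x(t) ∈ X for all t ≥ 0, x(0) = 0, and dx/dt(t) = A(x(t)) + B₁(ω(t)) + B₂(u(t)), where u(t)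 = H(P₁⁻¹x(t)) (well defined since P₁⁻¹x(t) ∈ X). Define z(t) = C₁(x(t)) + D₂(u(t)) + D₁(ω(t)) and assume z is continuous. Then for every T ≥ 0, ∫₀ᵀ ‖z(t)‖² dt ≤ γ₁² ∫₀ᵀ ‖ω(t)‖² dt. -/
open RealInnerProductSpace MeasureTheory intervalIntegral

/-!
With the storage function `S(t) = ⟪x(t), P₁⁻¹ x(t)⟫`, the operator inequality evaluated at
`h = P₁⁻¹ x(t)`, `ω = ω(t)` and `υ = γ₁⁻¹ z(t)` gives the dissipation inequality
`S'(t) + γ₁⁻¹ ‖z(t)‖² ≤ γ₁ ‖ω(t)‖²`. Integrating over `[0, T]` and using `S(0) = 0 ≤ S(T)`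
yields `γ₁⁻¹ ∫ ‖z‖² ≤ γ₁ ∫ ‖ω‖²`.
-/

open Set in
theorem integral_le_integral_of_storage {S S' f g : ℝ → ℝ} {a b : ℝ} (hab : a ≤ b)
    (hS : ∀ t ∈ Icc a b, HasDerivAt S (S' t) t)
    (hf : IntervalIntegrable f volume a b) (hg : IntervalIntegrable g volume a b)
    (hdiss : ∀ t ∈ Ioo a b, S' t + f t ≤ g t) (hSab : S a ≤ S b) :
    ∫ t in a..b, f t ≤ ∫ t in a..b, g t := by
  have hgain : S b - S a ≤ ∫ t in a..b, (g t - f t) :=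
    sub_le_integral_of_hasDeriv_right_of_le hab
      (fun t ht => (hS t ht).continuousAt.continuousWithinAt)
      (fun t ht => (hS t (Ioo_subset_Icc_self ht)).hasDerivWithinAt)
      ((intervalIntegrable_iff_integrableOn_Icc_of_le hab).mp (hg.sub hf))
      (fun t ht => by linarith [hdiss t ht])
  rw [integral_sub hg hf] at hgain
  linarith

theorem HasDerivAt.inner_apply_self {E : Type*} [NormedAddCommGroup E] [InnerProductSpace ℝ E]
    {Q : E →L[ℝ] E} (hQ : ∀ x y, ⟪Q x, y⟫ = ⟪x, Q y⟫) {x : ℝ → E} {x' : E} {t : ℝ}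
    (hx : HasDerivAt x x' t) :
    HasDerivAt (fun s => ⟪x s, Q (x s)⟫) (2 * ⟪x', Q (x t)⟫) t := by
  refine (hx.inner ℝ (Q.hasFDerivAt.comp_hasDerivAt t hx)).congr_deriv ?_
  rw [← hQ, real_inner_comm x' (Q (x t)), Function.comp_apply]
  ring

theorem two_inner_inv_smul_self_sub {E : Type*} [NormedAddCommGroup E] [InnerProductSpace ℝ E]
    {γ : ℝ} (hγ : γ ≠ 0) (y : E) :
    2 * ⟪γ⁻¹ • y, y⟫ - γ * ‖γ⁻¹ • y‖ ^ 2 = γ⁻¹ * ‖y‖ ^ 2 := by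
  rw [real_inner_smul_left, real_inner_self_eq_norm_sq, norm_smul, Real.norm_eq_abs, mul_pow,
    sq_abs]
  field_simp
  ring

section ClosedLoop

variable {Z W U Y : Type*} [NormedAddCommGroup Z] [InnerProductSpace ℝ Z]
  [NormedAddCommGroup W] [NormedSpace ℝ W] [NormedAddCommGroup U] [NormedSpace ℝ U]
  [NormedAddCommGroup Y] [InnerProductSpace ℝ Y]

theorem closedLoop_dissipation_inequality (X : Submodule ℝ Z) (A : X →ₗ[ℝ] Z)
    (B₁ : W →L[ℝ] Z) (B₂ : U →L[ℝ] Z) (C₁ : X →ₗ[ℝ] Y) (H : X →ₗ[ℝ] U)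
    (D₁ : W →ₗ[ℝ] Y) (D₂ : U →ₗ[ℝ] Y) (P₁ : Z →L[ℝ] Z) (hP₁X : ∀ x ∈ X, P₁ x ∈ X)
    {ε γ : ℝ} (hε : 0 ≤ ε) (hγ : 0 < γ)
    (hdiss : ∀ (h : X) (ω : W) (υ : Y),
      2 * ⟪A ⟨P₁ (h : Z), hP₁X (h : Z) h.2⟩ + B₂ (H h) + B₁ ω, (h : Z)⟫
        - γ * ‖ω‖ ^ 2 - γ * ‖υ‖ ^ 2
        + 2 * ⟪υ, C₁ ⟨P₁ (h : Z), hP₁X (h : Z) h.2⟩ + D₂ (H h) + D₁ ω⟫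
      ≤ -ε * ‖(h : Z)‖ ^ 2)
    {ξ η : Z} (hξ : ξ ∈ X) (hη : η ∈ X) (hPη : P₁ η = ξ) (w : W) :
    2 * ⟪A ⟨ξ, hξ⟩ + B₁ w + B₂ (H ⟨η, hη⟩), η⟫
      + γ⁻¹ * ‖C₁ ⟨ξ, hξ⟩ + D₂ (H ⟨η, hη⟩) + D₁ w‖ ^ 2 ≤ γ * ‖w‖ ^ 2 := by
  subst hPη
  set y := C₁ ⟨P₁ η, hξ⟩ + D₂ (H ⟨η, hη⟩) + D₁ w
  have key := hdiss ⟨η, hη⟩ w (γ⁻¹ • y)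
  have hsupply := two_inner_inv_smul_self_sub hγ.ne' y
  rw [add_right_comm (A _)]
  linarith [mul_nonneg hε (sq_nonneg ‖η‖)]

end ClosedLoop

theorem fullState_feedback_L2_gain_general
    {Z : Type*} [NormedAddCommGroup Z] [InnerProductSpace ℝ Z]
    (X : Submodule ℝ Z) {r m p : ℕ}
    (A : X →ₗ[ℝ] Z)
    (B₁ : EuclideanSpace ℝ (Fin r) →L[ℝ] Z) (B₂ : EuclideanSpace ℝ (Fin m) →L[ℝ] Z)
    (C₁ : X →ₗ[ℝ] EuclideanSpace ℝ (Fin p)) (H : X →ₗ[ℝ] EuclideanSpace ℝ (Fin m))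
    (D₁ : EuclideanSpace ℝ (Fin r) →ₗ[ℝ] EuclideanSpace ℝ (Fin p))
    (D₂ : EuclideanSpace ℝ (Fin m) →ₗ[ℝ] EuclideanSpace ℝ (Fin p))
    (P₁ Pinv : Z →L[ℝ] Z)
    -- P₁ is self-adjoint, coercive, maps X into X with P₁(X) = X
    (hP₁X : ∀ x ∈ X, P₁ x ∈ X)
    -- Pinv is the (continuous) inverse of P₁, which is coercive, self-adjoint and maps X into X
    (hinv2 : ∀ x, P₁ (Pinv x) = x)
    (hPinvsa : ∀ x y : Z, ⟪Pinv x, y⟫ = ⟪x, Pinv y⟫)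
    (hPinvcoer : ∃ δ > 0, ∀ x : Z, ⟪x, Pinv x⟫ ≥ δ * ‖x‖ ^ 2)
    (hPinvX : ∀ x ∈ X, Pinv x ∈ X)
    (ε₁ γ₁ : ℝ) (hε₁ : 0 < ε₁) (hγ₁ : 0 < γ₁)
    -- the operator inequality
    (hdiss : ∀ (h : X) (ω : EuclideanSpace ℝ (Fin r)) (υ : EuclideanSpace ℝ (Fin p)),
      2 * ⟪A ⟨P₁ (h : Z), hP₁X (h : Z) h.2⟩ + B₂ (H h) + B₁ ω, (h : Z)⟫
        - γ₁ * ‖ω‖ ^ 2 - γ₁ * ‖υ‖ ^ 2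
        + 2 * ⟪υ, C₁ ⟨P₁ (h : Z), hP₁X (h : Z) h.2⟩ + D₂ (H h) + D₁ ω⟫
      ≤ -ε₁ * ‖(h : Z)‖ ^ 2)
    -- the closed-loop trajectory
    (ω : ℝ → EuclideanSpace ℝ (Fin r)) (hω : Continuous ω)
    (x : ℝ → Z) (hxX : ∀ t, 0 ≤ t → x t ∈ X) (hx0 : x 0 = 0)
    (u : ℝ → EuclideanSpace ℝ (Fin m))
    (hu : ∀ t, 0 ≤ t → ∀ (hm : Pinv (x t) ∈ X), u t = H ⟨Pinv (x t), hm⟩)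
    (hdyn : ∀ t, 0 ≤ t → ∀ (hm : x t ∈ X),
      HasDerivAt x (A ⟨x t, hm⟩ + B₁ (ω t) + B₂ (u t)) t)
    (z : ℝ → EuclideanSpace ℝ (Fin p))
    (hz : ∀ t, 0 ≤ t → ∀ (hm : x t ∈ X), z t = C₁ ⟨x t, hm⟩ + D₂ (u t) + D₁ (ω t))
    (hzc : Continuous z) :
    ∀ T, 0 ≤ T →
      (∫ t in (0:ℝ)..T, ‖z t‖ ^ 2) ≤ γ₁ ^ 2 * ∫ t in (0:ℝ)..T, ‖ω t‖ ^ 2 := by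
  intro T hT
  obtain ⟨δ, hδ, hδcoer⟩ := hPinvcoer
  have hstorage : ∀ t ∈ Set.Icc 0 T,
      HasDerivAt (fun s => ⟪x s, Pinv (x s)⟫) (2 * ⟪deriv x t, Pinv (x t)⟫) t := by
    intro t ht
    have hx := hdyn t ht.1 (hxX t ht.1)
    rw [hx.deriv]
    exact hx.inner_apply_self hPinvsa
  have hrate : ∀ t ∈ Set.Ioo 0 T,
      2 * ⟪deriv x t, Pinv (x t)⟫ + γ₁⁻¹ * ‖z t‖ ^ 2 ≤ γ₁ * ‖ω t‖ ^ 2 := by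
    intro t ht
    have hxt := hxX t ht.1.le
    have hPxt := hPinvX _ hxt
    rw [(hdyn t ht.1.le hxt).deriv, hz t ht.1.le hxt, hu t ht.1.le hPxt]
    exact closedLoop_dissipation_inequality X A B₁ B₂ C₁ H D₁ D₂ P₁ hP₁X hε₁.le hγ₁ hdiss
      hxt hPxt (hinv2 _) (ω t)
  have hgain := integral_le_integral_of_storage (f := fun t => γ₁⁻¹ * ‖z t‖ ^ 2)
    (g := fun t => γ₁ * ‖ω t‖ ^ 2) hT hstorage
    ((continuous_const.mul (hzc.norm.pow 2)).intervalIntegrable 0 T)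
    ((continuous_const.mul (hω.norm.pow 2)).intervalIntegrable 0 T) hrate
    (by simpa [hx0] using le_trans (by positivity) (hδcoer (x T)))
  rw [intervalIntegral.integral_const_mul, intervalIntegral.integral_const_mul, inv_mul_le_iff₀ hγ₁] at hgain
  rwa [sq, mul_assoc]

/-- (Full-state feedback L2-gain bound.) Under the operator inequality of
Theorem 2 of the paper, the closed-loop trajectory with full-state feedback
`u(t) = H(P₁⁻¹ x(t))` satisfies the L2-gain bound `‖z‖_{L2} ≤ γ₁ ‖ω‖_{L2}`. -/
theorem fullState_feedback_L2_gain
    {Z : Type*} [NormedAddCommGroup Z] [InnerProductSpace ℝ Z] [CompleteSpace Z]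
    (X : Submodule ℝ Z) {r m p : ℕ}
    (A : X →ₗ[ℝ] Z)
    (B₁ : EuclideanSpace ℝ (Fin r) →L[ℝ] Z) (B₂ : EuclideanSpace ℝ (Fin m) →L[ℝ] Z)
    (C₁ : X →ₗ[ℝ] EuclideanSpace ℝ (Fin p)) (H : X →ₗ[ℝ] EuclideanSpace ℝ (Fin m))
    (D₁ : EuclideanSpace ℝ (Fin r) →ₗ[ℝ] EuclideanSpace ℝ (Fin p))
    (D₂ : EuclideanSpace ℝ (Fin m) →ₗ[ℝ] EuclideanSpace ℝ (Fin p))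
    (P₁ Pinv : Z →L[ℝ] Z)
    -- P₁ is self-adjoint, coercive, maps X into X with P₁(X) = X
    (hP₁sa : ∀ x y : Z, ⟪P₁ x, y⟫ = ⟪x, P₁ y⟫)
    (hP₁coer : ∃ ε > 0, ∀ x : Z, ⟪x, P₁ x⟫ ≥ ε * ‖x‖ ^ 2)
    (hP₁X : ∀ x ∈ X, P₁ x ∈ X)
    (hP₁img : ⇑P₁ '' (X : Set Z) = (X : Set Z))
    -- Pinv is the (continuous) inverse of P₁, which is coercive, self-adjoint and maps X into X
    (hinv1 : ∀ x, Pinv (P₁ x) = x) (hinv2 : ∀ x, P₁ (Pinv x) = x)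
    (hPinvsa : ∀ x y : Z, ⟪Pinv x, y⟫ = ⟪x, Pinv y⟫)
    (hPinvcoer : ∃ δ > 0, ∀ x : Z, ⟪x, Pinv x⟫ ≥ δ * ‖x‖ ^ 2)
    (hPinvX : ∀ x ∈ X, Pinv x ∈ X)
    (ε₁ γ₁ : ℝ) (hε₁ : 0 < ε₁) (hγ₁ : 0 < γ₁)
    -- the operator inequality
    (hdiss : ∀ (h : X) (ω : EuclideanSpace ℝ (Fin r)) (υ : EuclideanSpace ℝ (Fin p)),
      2 * ⟪A ⟨P₁ (h : Z), hP₁X (h : Z) h.2⟩ + B₂ (H h) + B₁ ω, (h : Z)⟫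
        - γ₁ * ‖ω‖ ^ 2 - γ₁ * ‖υ‖ ^ 2
        + 2 * ⟪υ, C₁ ⟨P₁ (h : Z), hP₁X (h : Z) h.2⟩ + D₂ (H h) + D₁ ω⟫
      ≤ -ε₁ * ‖(h : Z)‖ ^ 2)
    -- the closed-loop trajectory
    (ω : ℝ → EuclideanSpace ℝ (Fin r)) (hω : Continuous ω)
    (x : ℝ → Z) (hxX : ∀ t, 0 ≤ t → x t ∈ X) (hx0 : x 0 = 0)
    (u : ℝ → EuclideanSpace ℝ (Fin m))
    (hu : ∀ t, 0 ≤ t → ∀ (hm : Pinv (x t) ∈ X), u t = H ⟨Pinv (x t), hm⟩)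
    (hdyn : ∀ t, 0 ≤ t → ∀ (hm : x t ∈ X),
      HasDerivAt x (A ⟨x t, hm⟩ + B₁ (ω t) + B₂ (u t)) t)
    (z : ℝ → EuclideanSpace ℝ (Fin p))
    (hz : ∀ t, 0 ≤ t → ∀ (hm : x t ∈ X), z t = C₁ ⟨x t, hm⟩ + D₂ (u t) + D₁ (ω t))
    (hzc : Continuous z) :
    ∀ T, 0 ≤ T →
      (∫ t in (0:ℝ)..T, ‖z t‖ ^ 2) ≤ γ₁ ^ 2 * ∫ t in (0:ℝ)..T, ‖ω t‖ ^ 2 :=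
  fullState_feedback_L2_gain_general X A B₁ B₂ C₁ H D₁ D₂ P₁ Pinv hP₁X hinv2 hPinvsa hPinvcoer
    hPinvX ε₁ γ₁ hε₁ hγ₁ hdiss ω hω x hxX hx0 u hu hdyn z hz hzc
end

section
/- (Estimator L2-gain bound.) Let Z be a real Hilbert space, X a linear subspace of Z, A : X → Z a linear map, B₁ : ℝ^r → Z a continuous linear map, C₂ : X → ℝ^q and C₃ : X → ℝ^{p₁} linear maps, and D₂ : ℝ^r → ℝ^q, D₃ : ℝ^r → ℝ^{p₁} linear maps. Let P₂ : Z → Z be a continuous linear operator that is self-adjoint and coercive, let 𝒵 : ℝ^q → Z be a continuous linear map, and let L : ℝ^q → Z be a continuous linear map satisfying P₂(Lv) = 𝒵v for all v ∈ ℝ^q. Suppose there exist scalars ε₂ > 0 and γ₂ > 0 such that for all e ∈ X, ω ∈ ℝ^r, and υ ∈ ℝ^{p₁}: 2⟨P₂(Ae) + 𝒵(C₂e), e⟩ − 2⟨P₂(B₁ω) + 𝒵(D₂ω), e⟩ − γ₂‖ω‖² − γ₂‖υ‖² + 2υᵀ(C₃e + D₃ω) ≤ −ε₂‖e‖². Then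 (i) P₂ is bijective with continuous inverse; and (ii) for any continuous ω : [0,∞) → ℝ^r and any continuously differentiable e : [0,∞) → Z with e(t) ∈ X for all t ≥ 0, e(0) = 0, and de/dt(t) = A(e(t)) + L(C₂(e(t))) − B₁(ω(t)) − L(D₂(ω(t))), if z_e(t) = C₃(e(t)) + D₃(ω(t)) is continuous, then for every T ≥ 0, ∫₀ᵀ ‖z_e(t)‖² dt ≤ γ₂² ∫₀ᵀ ‖ω(t)‖² dt. -/
open RealInnerProductSpace MeasureTheory intervalIntegral

/-!
Part (i) is the Lax–Milgram theorem for the coercive form `(x, y) ↦ ⟪P₂ x, y⟫`. For part (ii),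
`S(t) = γ₂ ⟪P₂ e(t), e(t)⟫` is a storage function: along the error dynamics, self-adjointness and
`P₂ L = 𝒵` give `S' = 2 γ₂ ⟪P₂ ė, e⟫`, and the operator inequality with `υ = z_e / γ₂` (completing
the square in `υ`) yields the dissipation inequality `S' ≤ γ₂² ‖ω‖² - ‖z_e‖²`. Integrating over
`[0, T]` with `S(0) = 0 ≤ S(T)` gives the gain bound.
-/

section QuadraticForm

variable {V : Type*} [NormedAddCommGroup V] [InnerProductSpace ℝ V]

theorem isCoercive_innerSL_comp {P : V →L[ℝ] V} {ε : ℝ} (hε : 0 < ε)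
    (hP : ∀ x, ⟪x, P x⟫ ≥ ε * ‖x‖ ^ 2) : IsCoercive ((innerSL ℝ).comp P) :=
  ⟨ε, hε, fun x => by simpa [sq, mul_assoc, real_inner_comm] using hP x⟩

theorem exists_continuousLinearEquiv_eq_of_coercive [CompleteSpace V] {P : V →L[ℝ] V} {ε : ℝ}
    (hε : 0 < ε) (hP : ∀ x, ⟪x, P x⟫ ≥ ε * ‖x‖ ^ 2) :
    ∃ Q : V ≃L[ℝ] V, (Q : V →L[ℝ] V) = P := by
  have hco := isCoercive_innerSL_comp hε hP
  refine ⟨hco.continuousLinearEquivOfBilin, ContinuousLinearMap.ext fun v => ?_⟩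
  exact (hco.unique_continuousLinearEquivOfBilin fun w => by simp).symm

theorem inner_apply_self_nonneg_of_coercive {P : V →L[ℝ] V} {ε : ℝ} (hε : 0 < ε)
    (hP : ∀ x, ⟪x, P x⟫ ≥ ε * ‖x‖ ^ 2) (x : V) : 0 ≤ ⟪P x, x⟫ := by
  rw [real_inner_comm]
  exact le_trans (by positivity) (hP x)

theorem HasDerivAt.inner_apply_self_s4 {P : V →L[ℝ] V} (hP : (P : V →ₗ[ℝ] V).IsSymmetric)
    {e : ℝ → V} {d : V} {t : ℝ} (he : HasDerivAt e d t) :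
    HasDerivAt (fun s => ⟪P (e s), e s⟫) (2 * ⟪P d, e t⟫) t := by
  have h : HasDerivAt (fun s => ⟪P (e s), e s⟫) (⟪P (e t), d⟫ + ⟪P d, e t⟫) t :=
    (P.hasFDerivAt.comp_hasDerivAt t he).inner ℝ he
  have hsym : ⟪P (e t), d⟫ = ⟪P d, e t⟫ := (real_inner_comm d (P (e t))).trans (hP d (e t)).symm
  rwa [hsym, ← two_mul] at h

end QuadraticForm

theorem mul_add_norm_sq_nonpos_of_forall_le {V : Type*} [NormedAddCommGroup V]
    [InnerProductSpace ℝ V] {a γ : ℝ} {z : V} (hγ : 0 < γ)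
    (h : ∀ υ : V, a - γ * ‖υ‖ ^ 2 + 2 * ⟪υ, z⟫ ≤ 0) : γ * a + ‖z‖ ^ 2 ≤ 0 := by
  have hz := h (γ⁻¹ • z)
  rw [norm_smul, real_inner_smul_left, real_inner_self_eq_norm_sq, Real.norm_of_nonneg
    (inv_nonneg.2 hγ.le)] at hz
  have key : γ * (a - γ * (γ⁻¹ * ‖z‖) ^ 2 + 2 * (γ⁻¹ * ‖z‖ ^ 2)) = γ * a + ‖z‖ ^ 2 := by
    field_simp
    ring
  rw [← key]
  exact mul_nonpos_of_nonneg_of_nonpos hγ.le hz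

theorem integral_norm_sq_le_of_dissipation {F G : Type*} [NormedAddCommGroup F]
    [NormedAddCommGroup G] {S : ℝ → ℝ} {w : ℝ → F} {z : ℝ → G} {γ T : ℝ} (hT : 0 ≤ T)
    (hw : Continuous w) (hz : Continuous z) (hS0 : S 0 = 0) (hST : 0 ≤ S T)
    (hdiss : ∀ t ∈ Set.Icc 0 T, ∃ s, HasDerivAt S s t ∧ s ≤ γ ^ 2 * ‖w t‖ ^ 2 - ‖z t‖ ^ 2) :
    ∫ t in (0 : ℝ)..T, ‖z t‖ ^ 2 ≤ γ ^ 2 * ∫ t in (0 : ℝ)..T, ‖w t‖ ^ 2 := by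
  have hsupply : Continuous fun t => γ ^ 2 * ‖w t‖ ^ 2 - ‖z t‖ ^ 2 := by fun_prop
  choose! S' hS hS' using hdiss
  have hle := sub_le_integral_of_hasDeriv_right_of_le hT
    (fun t ht => (hS t ht).continuousAt.continuousWithinAt)
    (fun t ht => (hS t (Set.Ioo_subset_Icc_self ht)).hasDerivWithinAt)
    hsupply.integrableOn_Icc (fun t ht => hS' t (Set.Ioo_subset_Icc_self ht))
  have hwi : IntervalIntegrable (fun t => γ ^ 2 * ‖w t‖ ^ 2) volume 0 T :=
    (by fun_prop : Continuous _).intervalIntegrable 0 T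
  have hzi : IntervalIntegrable (fun t => ‖z t‖ ^ 2) volume 0 T :=
    (by fun_prop : Continuous _).intervalIntegrable 0 T
  rw [intervalIntegral.integral_sub hwi hzi, intervalIntegral.integral_const_mul] at hle
  linarith

theorem estimator_dissipation {Z : Type*} [NormedAddCommGroup Z] [InnerProductSpace ℝ Z]
    {X : Submodule ℝ Z} {r q p₁ : ℕ} {A : X →ₗ[ℝ] Z} {B₁ : EuclideanSpace ℝ (Fin r) →L[ℝ] Z}
    {C₂ : X →ₗ[ℝ] EuclideanSpace ℝ (Fin q)} {C₃ : X →ₗ[ℝ] EuclideanSpace ℝ (Fin p₁)}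
    {D₂ : EuclideanSpace ℝ (Fin r) →ₗ[ℝ] EuclideanSpace ℝ (Fin q)}
    {D₃ : EuclideanSpace ℝ (Fin r) →ₗ[ℝ] EuclideanSpace ℝ (Fin p₁)} {P₂ : Z →L[ℝ] Z}
    {𝒵 L : EuclideanSpace ℝ (Fin q) →L[ℝ] Z} (hL : ∀ v, P₂ (L v) = 𝒵 v) {ε₂ γ₂ : ℝ}
    (hε₂ : 0 < ε₂) (hγ₂ : 0 < γ₂)
    (hdiss : ∀ (e : X) (ω : EuclideanSpace ℝ (Fin r)) (υ : EuclideanSpace ℝ (Fin p₁)),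
      2 * ⟪P₂ (A e) + 𝒵 (C₂ e), (e : Z)⟫ - 2 * ⟪P₂ (B₁ ω) + 𝒵 (D₂ ω), (e : Z)⟫
        - γ₂ * ‖ω‖ ^ 2 - γ₂ * ‖υ‖ ^ 2 + 2 * ⟪υ, C₃ e + D₃ ω⟫
      ≤ -ε₂ * ‖(e : Z)‖ ^ 2)
    (e : X) (ω : EuclideanSpace ℝ (Fin r)) :
    γ₂ * (2 * ⟪P₂ (A e + L (C₂ e) - B₁ ω - L (D₂ ω)), (e : Z)⟫)
      ≤ γ₂ ^ 2 * ‖ω‖ ^ 2 - ‖C₃ e + D₃ ω‖ ^ 2 := by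
  have hP₂ : P₂ (A e + L (C₂ e) - B₁ ω - L (D₂ ω))
      = (P₂ (A e) + 𝒵 (C₂ e)) - (P₂ (B₁ ω) + 𝒵 (D₂ ω)) := by
    simp only [map_sub, map_add, hL]
    abel
  have hsq := mul_add_norm_sq_nonpos_of_forall_le (a := 2 * ⟪P₂ (A e + L (C₂ e) - B₁ ω
    - L (D₂ ω)), (e : Z)⟫ - γ₂ * ‖ω‖ ^ 2) hγ₂ fun υ => by
      rw [hP₂, inner_sub_left]
      linarith [hdiss e ω υ, mul_nonneg hε₂.le (sq_nonneg ‖(e : Z)‖)]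
  linear_combination hsq

/-- (Estimator L2-gain bound.) Under the operator inequality of Theorem 3
of the paper, `P₂` is bijective with continuous inverse, and the estimation-error
trajectory driven by the error injection `L = P₂⁻¹𝒵` satisfies the L2-gain bound
`‖z_e‖_{L2} ≤ γ₂ ‖ω‖_{L2}`. -/
theorem estimator_L2_gain
    {Z : Type*} [NormedAddCommGroup Z] [InnerProductSpace ℝ Z] [CompleteSpace Z]
    (X : Submodule ℝ Z) {r q p₁ : ℕ}
    (A : X →ₗ[ℝ] Z)
    (B₁ : EuclideanSpace ℝ (Fin r) →L[ℝ] Z)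
    (C₂ : X →ₗ[ℝ] EuclideanSpace ℝ (Fin q)) (C₃ : X →ₗ[ℝ] EuclideanSpace ℝ (Fin p₁))
    (D₂ : EuclideanSpace ℝ (Fin r) →ₗ[ℝ] EuclideanSpace ℝ (Fin q))
    (D₃ : EuclideanSpace ℝ (Fin r) →ₗ[ℝ] EuclideanSpace ℝ (Fin p₁))
    (P₂ : Z →L[ℝ] Z)
    (hP₂sa : ∀ x y : Z, ⟪P₂ x, y⟫ = ⟪x, P₂ y⟫)
    (hP₂coer : ∃ ε > 0, ∀ x : Z, ⟪x, P₂ x⟫ ≥ ε * ‖x‖ ^ 2)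
    (𝒵 : EuclideanSpace ℝ (Fin q) →L[ℝ] Z) (L : EuclideanSpace ℝ (Fin q) →L[ℝ] Z)
    (hL : ∀ v, P₂ (L v) = 𝒵 v)
    (ε₂ γ₂ : ℝ) (hε₂ : 0 < ε₂) (hγ₂ : 0 < γ₂)
    -- the operator inequality
    (hdiss : ∀ (e : X) (ω : EuclideanSpace ℝ (Fin r)) (υ : EuclideanSpace ℝ (Fin p₁)),
      2 * ⟪P₂ (A e) + 𝒵 (C₂ e), (e : Z)⟫ - 2 * ⟪P₂ (B₁ ω) + 𝒵 (D₂ ω), (e : Z)⟫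
        - γ₂ * ‖ω‖ ^ 2 - γ₂ * ‖υ‖ ^ 2 + 2 * ⟪υ, C₃ e + D₃ ω⟫
      ≤ -ε₂ * ‖(e : Z)‖ ^ 2) :
    -- (i) P₂ is bijective with continuous inverse
    (Function.Bijective P₂ ∧
      ∃ Pinv : Z →L[ℝ] Z, (∀ x, Pinv (P₂ x) = x) ∧ (∀ x, P₂ (Pinv x) = x)) ∧
    -- (ii) the L2-gain bound for the error dynamics
    (∀ (ω : ℝ → EuclideanSpace ℝ (Fin r)), Continuous ω →
      ∀ (e : ℝ → Z), (∀ t, 0 ≤ t → e t ∈ X) → e 0 = 0 →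
      (∀ t, 0 ≤ t → ∀ (hm : e t ∈ X),
        HasDerivAt e (A ⟨e t, hm⟩ + L (C₂ ⟨e t, hm⟩) - B₁ (ω t) - L (D₂ (ω t))) t) →
      ∀ (ze : ℝ → EuclideanSpace ℝ (Fin p₁)),
        (∀ t, 0 ≤ t → ∀ (hm : e t ∈ X), ze t = C₃ ⟨e t, hm⟩ + D₃ (ω t)) →
        Continuous ze →
        ∀ T, 0 ≤ T →
          (∫ t in (0:ℝ)..T, ‖ze t‖ ^ 2) ≤ γ₂ ^ 2 * ∫ t in (0:ℝ)..T, ‖ω t‖ ^ 2) := by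
  obtain ⟨ε, hε, hcoer⟩ := hP₂coer
  obtain ⟨Q, hQ⟩ := exists_continuousLinearEquiv_eq_of_coercive hε hcoer
  refine ⟨⟨hQ ▸ Q.bijective, Q.symm, fun x => ?_, fun x => ?_⟩, ?_⟩
  · rw [← hQ]; exact Q.symm_apply_apply x
  · rw [← hQ]; exact Q.apply_symm_apply x
  intro ω hω e heX he0 hde ze hze hzec T hT
  refine integral_norm_sq_le_of_dissipation (S := fun t => γ₂ * ⟪P₂ (e t), e t⟫) hT hω hzec
    (by simp [he0]) (mul_nonneg hγ₂.le (inner_apply_self_nonneg_of_coercive hε hcoer _))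
    fun t ht => ⟨_, ((hde t ht.1 (heX t ht.1)).inner_apply_self_s4 hP₂sa).const_mul γ₂, ?_⟩
  rw [hze t ht.1 (heX t ht.1)]
  exact estimator_dissipation hL hε₂ hγ₂ hdiss ⟨e t, heX t ht.1⟩ (ω t)
end

section
/- (Self-adjointness of the delay-structured operator class.) Let n, K be positive natural numbers and 0 < τ₁ ≤ τ₂ ≤ ⋯ ≤ τ_K real delays. Let P ∈ ℝ^{n×n}, and for i, j ∈ {1,…,K} let Q_i : [−τ_i, 0] → ℝ^{n×n}, S_i : [−τ_i, 0] → ℝ^{n×n}, and R_{ij} : [−τ_i, 0] × [−τ_j, 0] → ℝ^{n×n} be continuous. Assume: S_i(s) = S_i(s)ᵀ for all i and s; R_{ij}(s, θ) = R_{ji}(θ, s)ᵀ for all i, j, s, θ; P = τ_K·Q_i(0)ᵀ for all i; and Q_j(s) = R_{ij}(0, s) for all i, j, s. For x ∈ ℝⁿ and continuous φ_i : [−τ_i, 0] → ℝⁿ, define 𝒫(x, φ) to be the pair with first component P·x + Σ_{i=1}^K ∫_{−τ_i}^0 Q_i(s)·φ_i(s) ds and, for each i, second component the function s ↦ τ_K·Q_i(s)ᵀ·x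 + τ_K·S_i(s)·φ_i(s) + Σ_{j=1}^K ∫_{−τ_j}^0 R_{ij}(s, θ)·φ_j(θ) dθ on [−τ_i, 0]. Then 𝒫 is self-adjoint with respect to the weighted inner product: for all x, y ∈ ℝⁿ and all continuous φ_i, ψ_i : [−τ_i, 0] → ℝⁿ, τ_K·⟨(𝒫(y, ψ))₀, x⟩ + Σ_{i=1}^K ∫_{−τ_i}^0 ⟨(𝒫(y, ψ))_i(s), φ_i(s)⟩ ds = τ_K·⟨y, (𝒫(x, φ))₀⟩ + Σ_{i=1}^K ∫_{−τ_i}^0 ⟨ψ_i(s), (𝒫(x, φ))_i(s)⟩ ds, where (·)₀ denotes the ℝⁿ component and (·)_i the i-th function component. -/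
open Matrix MeasureTheory intervalIntegral

section helpers
variable {α : Type*} [TopologicalSpace α] {m : ℕ}

lemma contOn_entry {A : α → Matrix (Fin m) (Fin m) ℝ} {s : Set α}
    (hA : ContinuousOn A s) (a b : Fin m) : ContinuousOn (fun t => A t a b) s :=
  (continuous_apply_apply a b).comp_continuousOn hA

lemma contOn_mulVec {A : α → Matrix (Fin m) (Fin m) ℝ} {v : α → Fin m → ℝ} {s : Set α}
    (hA : ContinuousOn A s) (hv : ContinuousOn v s) :
    ContinuousOn (fun t => (A t).mulVec (v t)) s := by
  apply continuousOn_pi.2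
  intro a
  simp only [Matrix.mulVec, dotProduct]
  exact continuousOn_finset_sum _ fun b _ =>
    (contOn_entry hA a b).mul ((continuous_apply b).comp_continuousOn hv)

lemma contOn_dot {u v : α → Fin m → ℝ} {s : Set α}
    (hu : ContinuousOn u s) (hv : ContinuousOn v s) :
    ContinuousOn (fun t => u t ⬝ᵥ v t) s := by
  simp only [dotProduct]
  exact continuousOn_finset_sum _ fun b _ =>
    ((continuous_apply b).comp_continuousOn hu).mul ((continuous_apply b).comp_continuousOn hv)

lemma dot_shift (M : Matrix (Fin m) (Fin m) ℝ) (u v : Fin m → ℝ) :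
    M.mulVec u ⬝ᵥ v = u ⬝ᵥ Mᵀ.mulVec v := by
  simp only [Matrix.mulVec, dotProduct, Matrix.transpose_apply,
    Finset.sum_mul, Finset.mul_sum]
  rw [Finset.sum_comm]
  congr 1; ext a; congr 1; ext b; ring
end helpers

noncomputable def dotCLM {m : ℕ} (w : Fin m → ℝ) : (Fin m → ℝ) →L[ℝ] ℝ :=
  LinearMap.toContinuousLinearMap
    { toFun := fun v => v ⬝ᵥ w
      map_add' := fun u v => add_dotProduct u v w
      map_smul' := fun c v => smul_dotProduct c v w }

lemma intervalIntegral_dot {m : ℕ} {f : ℝ → Fin m → ℝ} {a b : ℝ} (w : Fin m → ℝ)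
    (hf : IntervalIntegrable f MeasureTheory.volume a b) :
    (∫ s in a..b, f s) ⬝ᵥ w = ∫ s in a..b, f s ⬝ᵥ w := by
  simpa [dotCLM] using ((dotCLM w).intervalIntegral_comp_comm hf).symm

lemma swap_double {a b : ℝ} (ha : a ≤ 0) (hb : b ≤ 0) {f : ℝ → ℝ → ℝ}
    (hf : MeasureTheory.IntegrableOn (fun p : ℝ × ℝ => f p.1 p.2)
      (Set.Ioc a 0 ×ˢ Set.Ioc b 0)) :
    (∫ s in a..0, ∫ θ in b..0, f s θ) = ∫ θ in b..0, ∫ s in a..0, f s θ := by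
  rw [intervalIntegral.integral_of_le ha, intervalIntegral.integral_of_le hb]
  simp_rw [intervalIntegral.integral_of_le ha, intervalIntegral.integral_of_le hb]
  rw [IntegrableOn, Measure.volume_eq_prod, ← Measure.prod_restrict] at hf
  exact MeasureTheory.integral_integral_swap hf

lemma integrable_param {a b : ℝ} (ha : a ≤ 0) (hb : b ≤ 0) {f : ℝ → ℝ → ℝ}
    (hf : MeasureTheory.IntegrableOn (fun p : ℝ × ℝ => f p.1 p.2)
      (Set.Ioc a 0 ×ˢ Set.Ioc b 0)) :
    IntervalIntegrable (fun s => ∫ θ in b..0, f s θ) MeasureTheory.volume a 0 := by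
  rw [intervalIntegrable_iff, Set.uIoc_of_le ha]
  simp_rw [intervalIntegral.integral_of_le hb]
  rw [IntegrableOn, Measure.volume_eq_prod, ← Measure.prod_restrict] at hf
  exact hf.integral_prod_left

lemma integrableOn_of_contOn {a b : ℝ} {f : ℝ × ℝ → ℝ}
    (hf : ContinuousOn f (Set.Icc a 0 ×ˢ Set.Icc b 0)) :
    MeasureTheory.IntegrableOn f (Set.Ioc a 0 ×ˢ Set.Ioc b 0) :=
  (hf.integrableOn_compact (isCompact_Icc.prod isCompact_Icc)).mono_set
    (Set.prod_mono Set.Ioc_subset_Icc_self Set.Ioc_subset_Icc_self)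

lemma sum_dot {m : ℕ} {ι : Type*} (s : Finset ι) (f : ι → Fin m → ℝ) (w : Fin m → ℝ) :
    (∑ i ∈ s, f i) ⬝ᵥ w = ∑ i ∈ s, f i ⬝ᵥ w := by
  simp only [dotProduct, Finset.sum_apply, Finset.sum_mul]
  exact Finset.sum_comm

lemma dot_sum {m : ℕ} {ι : Type*} (s : Finset ι) (f : ι → Fin m → ℝ) (w : Fin m → ℝ) :
    w ⬝ᵥ (∑ i ∈ s, f i) = ∑ i ∈ s, w ⬝ᵥ f i := by
  rw [dotProduct_comm, sum_dot]
  exact Finset.sum_congr rfl fun i _ => dotProduct_comm _ _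

lemma contOn_transpose {α : Type*} [TopologicalSpace α] {m : ℕ}
    {A : α → Matrix (Fin m) (Fin m) ℝ} {s : Set α} (hA : ContinuousOn A s) :
    ContinuousOn (fun t => (A t)ᵀ) s :=
  continuousOn_pi.2 fun a => continuousOn_pi.2 fun b => contOn_entry hA b a

lemma intervalIntegrable_fun_sum {ι : Type*} (s : Finset ι) {f : ι → ℝ → ℝ} {a b : ℝ}
    {μ : MeasureTheory.Measure ℝ} (h : ∀ i ∈ s, IntervalIntegrable (f i) μ a b) :
    IntervalIntegrable (fun x => ∑ i ∈ s, f i x) μ a b := by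
  have h2 := IntervalIntegrable.sum s h
  have he : (∑ i ∈ s, f i) = fun x => ∑ i ∈ s, f i x := by
    funext x; simp
  rwa [he] at h2

/-- (Self-adjointness of the delay-structured operator class
`𝒫_{P,Qᵢ,Sᵢ,Rᵢⱼ}` with respect to the weighted inner product on `Z_{n,K}`.) -/
theorem delay_operator_selfAdjoint
    {n K : ℕ} (hn : 0 < n) (hK : 0 < K)
    (τ : Fin K → ℝ) (hτpos : ∀ i, 0 < τ i) (hτmono : Monotone τ)
    (τK : ℝ) (hτK : τK = τ ⟨K - 1, Nat.sub_lt hK Nat.one_pos⟩)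
    (P : Matrix (Fin n) (Fin n) ℝ)
    (Q S : Fin K → ℝ → Matrix (Fin n) (Fin n) ℝ)
    (R : Fin K → Fin K → ℝ → ℝ → Matrix (Fin n) (Fin n) ℝ)
    (hQc : ∀ i, ContinuousOn (Q i) (Set.Icc (-(τ i)) 0))
    (hSc : ∀ i, ContinuousOn (S i) (Set.Icc (-(τ i)) 0))
    (hRc : ∀ i j, ContinuousOn (fun sθ : ℝ × ℝ => R i j sθ.1 sθ.2)
      (Set.Icc (-(τ i)) 0 ×ˢ Set.Icc (-(τ j)) 0))
    -- structural constraints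
    (hSsym : ∀ i, ∀ s ∈ Set.Icc (-(τ i)) 0, (S i s)ᵀ = S i s)
    (hRsym : ∀ i j, ∀ s ∈ Set.Icc (-(τ i)) 0, ∀ θ ∈ Set.Icc (-(τ j)) 0,
      R i j s θ = (R j i θ s)ᵀ)
    (hPQ : ∀ i, P = τK • (Q i 0)ᵀ)
    (hQR : ∀ i j, ∀ s ∈ Set.Icc (-(τ j)) 0, Q j s = R i j 0 s)
    -- arguments of the operator
    (x y : Fin n → ℝ) (φ ψ : Fin K → ℝ → Fin n → ℝ)
    (hφ : ∀ i, ContinuousOn (φ i) (Set.Icc (-(τ i)) 0))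
    (hψ : ∀ i, ContinuousOn (ψ i) (Set.Icc (-(τ i)) 0)) :
    -- ⟨𝒫(y,ψ), (x,φ)⟩ = ⟨(y,ψ), 𝒫(x,φ)⟩ in the weighted inner product
    τK * ((P.mulVec y + ∑ i, ∫ s in (-(τ i))..0, (Q i s).mulVec (ψ i s)) ⬝ᵥ x)
      + ∑ i, ∫ s in (-(τ i))..0,
          ((τK • (Q i s)ᵀ.mulVec y + τK • (S i s).mulVec (ψ i s)
              + ∑ j, ∫ θ in (-(τ j))..0, (R i j s θ).mulVec (ψ j θ)) ⬝ᵥ φ i s)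
    = τK * (y ⬝ᵥ (P.mulVec x + ∑ i, ∫ s in (-(τ i))..0, (Q i s).mulVec (φ i s)))
      + ∑ i, ∫ s in (-(τ i))..0,
          (ψ i s ⬝ᵥ (τK • (Q i s)ᵀ.mulVec x + τK • (S i s).mulVec (φ i s)
              + ∑ j, ∫ θ in (-(τ j))..0, (R i j s θ).mulVec (φ j θ))) := by
  have hle : ∀ i, -(τ i) ≤ (0:ℝ) := fun i => neg_nonpos.2 (hτpos i).le
  have hIcc : ∀ i, Set.uIcc (-(τ i)) 0 = Set.Icc (-(τ i)) 0 := fun i => Set.uIcc_of_le (hle i)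
  have h0mem : ∀ i, (0:ℝ) ∈ Set.Icc (-(τ i)) 0 := fun i => ⟨hle i, le_refl 0⟩
  -- symmetry of P
  have hQ0 : ∀ i, (Q i 0)ᵀ = Q i 0 := by
    intro i
    have h1 := hQR i i 0 (h0mem i)
    have h2 := hRsym i i 0 (h0mem i) 0 (h0mem i)
    rw [h1]; exact h2.symm
  have hPsym : Pᵀ = P := by
    rw [hPQ ⟨0, hK⟩, Matrix.transpose_smul, Matrix.transpose_transpose, hQ0 ⟨0, hK⟩,
      ← hQ0 ⟨0, hK⟩]
  -- continuity of fixed-s slices of R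
  have hRslice : ∀ i j (s : ℝ), s ∈ Set.Icc (-(τ i)) 0 →
      ContinuousOn (fun θ => R i j s θ) (Set.Icc (-(τ j)) 0) := fun i j s hs =>
    (hRc i j).comp (continuous_const.prodMk continuous_id).continuousOn
      (fun θ hθ => Set.mk_mem_prod hs hθ)
  -- basic interval integrabilities
  have hvQψ : ∀ i, IntervalIntegrable (fun s => (Q i s).mulVec (ψ i s))
      MeasureTheory.volume (-(τ i)) 0 := fun i =>
    (contOn_mulVec (hQc i) (hψ i)).intervalIntegrable_of_Icc (hle i)
  have hvQφ : ∀ i, IntervalIntegrable (fun s => (Q i s).mulVec (φ i s))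
      MeasureTheory.volume (-(τ i)) 0 := fun i =>
    (contOn_mulVec (hQc i) (hφ i)).intervalIntegrable_of_Icc (hle i)
  have hiB : ∀ i, IntervalIntegrable (fun s => (Q i s)ᵀ.mulVec y ⬝ᵥ φ i s)
      MeasureTheory.volume (-(τ i)) 0 := fun i =>
    (contOn_dot (contOn_mulVec (contOn_transpose (hQc i)) continuousOn_const)
      (hφ i)).intervalIntegrable_of_Icc (hle i)
  have hiC : ∀ i, IntervalIntegrable (fun s => (S i s).mulVec (ψ i s) ⬝ᵥ φ i s)
      MeasureTheory.volume (-(τ i)) 0 := fun i =>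
    (contOn_dot (contOn_mulVec (hSc i) (hψ i)) (hφ i)).intervalIntegrable_of_Icc (hle i)
  -- product-space integrability for the double-integral terms (LHS version)
  have hprodL : ∀ i j, MeasureTheory.IntegrableOn
      (fun p : ℝ × ℝ => (R i j p.1 p.2).mulVec (ψ j p.2) ⬝ᵥ φ i p.1)
      (Set.Ioc (-(τ i)) 0 ×ˢ Set.Ioc (-(τ j)) 0) := fun i j =>
    integrableOn_of_contOn (contOn_dot
      (contOn_mulVec (hRc i j) ((hψ j).comp continuous_snd.continuousOn (fun p hp => hp.2)))
      ((hφ i).comp continuous_fst.continuousOn (fun p hp => hp.1)))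
  have hprodR : ∀ i j, MeasureTheory.IntegrableOn
      (fun p : ℝ × ℝ => ψ i p.1 ⬝ᵥ (R i j p.1 p.2).mulVec (φ j p.2))
      (Set.Ioc (-(τ i)) 0 ×ˢ Set.Ioc (-(τ j)) 0) := fun i j =>
    integrableOn_of_contOn (contOn_dot
      ((hψ i).comp continuous_fst.continuousOn (fun p hp => hp.1))
      (contOn_mulVec (hRc i j) ((hφ j).comp continuous_snd.continuousOn (fun p hp => hp.2))))
  have hiD : ∀ i j, IntervalIntegrable
      (fun s => ∫ θ in (-(τ j))..0, ((R i j s θ).mulVec (ψ j θ) ⬝ᵥ φ i s))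
      MeasureTheory.volume (-(τ i)) 0 := fun i j =>
    integrable_param (hle i) (hle j) (hprodL i j)
  have hiD' : ∀ i j, IntervalIntegrable
      (fun s => ∫ θ in (-(τ j))..0, (ψ i s ⬝ᵥ (R i j s θ).mulVec (φ j θ)))
      MeasureTheory.volume (-(τ i)) 0 := fun i j =>
    integrable_param (hle i) (hle j) (hprodR i j)
  -- Expansion of the left-hand side
  have EL : τK * ((P.mulVec y + ∑ i, ∫ s in (-(τ i))..0, (Q i s).mulVec (ψ i s)) ⬝ᵥ x)
      + ∑ i, ∫ s in (-(τ i))..0,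
          ((τK • (Q i s)ᵀ.mulVec y + τK • (S i s).mulVec (ψ i s)
              + ∑ j, ∫ θ in (-(τ j))..0, (R i j s θ).mulVec (ψ j θ)) ⬝ᵥ φ i s)
      = τK * (P.mulVec y ⬝ᵥ x)
        + (∑ i, τK * ∫ s in (-(τ i))..0, ((Q i s).mulVec (ψ i s) ⬝ᵥ x))
        + (∑ i, τK * ∫ s in (-(τ i))..0, ((Q i s)ᵀ.mulVec y ⬝ᵥ φ i s))
        + (∑ i, τK * ∫ s in (-(τ i))..0, ((S i s).mulVec (ψ i s) ⬝ᵥ φ i s))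
        + ∑ i, ∑ j, ∫ s in (-(τ i))..0, ∫ θ in (-(τ j))..0,
            ((R i j s θ).mulVec (ψ j θ) ⬝ᵥ φ i s) := by
    have h1 : τK * ((P.mulVec y + ∑ i, ∫ s in (-(τ i))..0, (Q i s).mulVec (ψ i s)) ⬝ᵥ x)
        = τK * (P.mulVec y ⬝ᵥ x)
          + ∑ i, τK * ∫ s in (-(τ i))..0, ((Q i s).mulVec (ψ i s) ⬝ᵥ x) := by
      rw [add_dotProduct, sum_dot, mul_add, Finset.mul_sum]
      congr 1
      refine Finset.sum_congr rfl fun i _ => ?_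
      rw [intervalIntegral_dot x (hvQψ i)]
    have h2 : ∀ i, (∫ s in (-(τ i))..0,
        ((τK • (Q i s)ᵀ.mulVec y + τK • (S i s).mulVec (ψ i s)
            + ∑ j, ∫ θ in (-(τ j))..0, (R i j s θ).mulVec (ψ j θ)) ⬝ᵥ φ i s))
        = τK * (∫ s in (-(τ i))..0, ((Q i s)ᵀ.mulVec y ⬝ᵥ φ i s))
          + τK * (∫ s in (-(τ i))..0, ((S i s).mulVec (ψ i s) ⬝ᵥ φ i s))
          + ∑ j, ∫ s in (-(τ i))..0, ∫ θ in (-(τ j))..0,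
              ((R i j s θ).mulVec (ψ j θ) ⬝ᵥ φ i s) := by
      intro i
      rw [intervalIntegral.integral_congr (g := fun s =>
        τK * ((Q i s)ᵀ.mulVec y ⬝ᵥ φ i s) + τK * ((S i s).mulVec (ψ i s) ⬝ᵥ φ i s)
          + ∑ j, ∫ θ in (-(τ j))..0, ((R i j s θ).mulVec (ψ j θ) ⬝ᵥ φ i s)) ?_]
      · rw [intervalIntegral.integral_add (((hiB i).const_mul τK).add ((hiC i).const_mul τK))
          (intervalIntegrable_fun_sum Finset.univ (fun j _ => hiD i j)),
          intervalIntegral.integral_add ((hiB i).const_mul τK) ((hiC i).const_mul τK),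
          intervalIntegral.integral_const_mul, intervalIntegral.integral_const_mul,
          intervalIntegral.integral_finset_sum (fun j _ => hiD i j)]
      · intro s hs
        rw [hIcc i] at hs
        dsimp only
        rw [add_dotProduct, add_dotProduct, smul_dotProduct,
          smul_dotProduct, sum_dot, smul_eq_mul, smul_eq_mul]
        congr 1
        refine Finset.sum_congr rfl fun j _ => ?_
        exact intervalIntegral_dot (φ i s)
          ((contOn_mulVec (hRslice i j s hs) (hψ j)).intervalIntegrable_of_Icc (hle j))
    rw [h1, Finset.sum_congr rfl fun i _ => h2 i, Finset.sum_add_distrib,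
      Finset.sum_add_distrib]
    ring
  -- Expansion of the right-hand side
  have ER : τK * (y ⬝ᵥ (P.mulVec x + ∑ i, ∫ s in (-(τ i))..0, (Q i s).mulVec (φ i s)))
      + ∑ i, ∫ s in (-(τ i))..0,
          (ψ i s ⬝ᵥ (τK • (Q i s)ᵀ.mulVec x + τK • (S i s).mulVec (φ i s)
              + ∑ j, ∫ θ in (-(τ j))..0, (R i j s θ).mulVec (φ j θ)))
      = τK * (y ⬝ᵥ P.mulVec x)
        + (∑ i, τK * ∫ s in (-(τ i))..0, (ψ i s ⬝ᵥ (Q i s)ᵀ.mulVec x))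
        + (∑ i, τK * ∫ s in (-(τ i))..0, (y ⬝ᵥ (Q i s).mulVec (φ i s)))
        + (∑ i, τK * ∫ s in (-(τ i))..0, (ψ i s ⬝ᵥ (S i s).mulVec (φ i s)))
        + ∑ i, ∑ j, ∫ s in (-(τ i))..0, ∫ θ in (-(τ j))..0,
            (ψ i s ⬝ᵥ (R i j s θ).mulVec (φ j θ)) := by
    have h1 : τK * (y ⬝ᵥ (P.mulVec x + ∑ i, ∫ s in (-(τ i))..0, (Q i s).mulVec (φ i s)))
        = τK * (y ⬝ᵥ P.mulVec x)
          + ∑ i, τK * ∫ s in (-(τ i))..0, (y ⬝ᵥ (Q i s).mulVec (φ i s)) := by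
      rw [dotProduct_add, dot_sum, mul_add, Finset.mul_sum]
      congr 1
      refine Finset.sum_congr rfl fun i _ => ?_
      rw [dotProduct_comm, intervalIntegral_dot y (hvQφ i)]
      congr 1
      exact intervalIntegral.integral_congr fun s _ => dotProduct_comm _ _
    have hiB' : ∀ i, IntervalIntegrable (fun s => ψ i s ⬝ᵥ (Q i s)ᵀ.mulVec x)
        MeasureTheory.volume (-(τ i)) 0 := fun i =>
      (contOn_dot (hψ i) (contOn_mulVec (contOn_transpose (hQc i))
        continuousOn_const)).intervalIntegrable_of_Icc (hle i)
    have hiC' : ∀ i, IntervalIntegrable (fun s => ψ i s ⬝ᵥ (S i s).mulVec (φ i s))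
        MeasureTheory.volume (-(τ i)) 0 := fun i =>
      (contOn_dot (hψ i) (contOn_mulVec (hSc i) (hφ i))).intervalIntegrable_of_Icc (hle i)
    have h2 : ∀ i, (∫ s in (-(τ i))..0,
        (ψ i s ⬝ᵥ (τK • (Q i s)ᵀ.mulVec x + τK • (S i s).mulVec (φ i s)
            + ∑ j, ∫ θ in (-(τ j))..0, (R i j s θ).mulVec (φ j θ))))
        = τK * (∫ s in (-(τ i))..0, (ψ i s ⬝ᵥ (Q i s)ᵀ.mulVec x))
          + τK * (∫ s in (-(τ i))..0, (ψ i s ⬝ᵥ (S i s).mulVec (φ i s)))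
          + ∑ j, ∫ s in (-(τ i))..0, ∫ θ in (-(τ j))..0,
              (ψ i s ⬝ᵥ (R i j s θ).mulVec (φ j θ)) := by
      intro i
      rw [intervalIntegral.integral_congr (g := fun s =>
        τK * (ψ i s ⬝ᵥ (Q i s)ᵀ.mulVec x) + τK * (ψ i s ⬝ᵥ (S i s).mulVec (φ i s))
          + ∑ j, ∫ θ in (-(τ j))..0, (ψ i s ⬝ᵥ (R i j s θ).mulVec (φ j θ))) ?_]
      · rw [intervalIntegral.integral_add (((hiB' i).const_mul τK).add ((hiC' i).const_mul τK))
          (intervalIntegrable_fun_sum Finset.univ (fun j _ => hiD' i j)),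
          intervalIntegral.integral_add ((hiB' i).const_mul τK) ((hiC' i).const_mul τK),
          intervalIntegral.integral_const_mul, intervalIntegral.integral_const_mul,
          intervalIntegral.integral_finset_sum (fun j _ => hiD' i j)]
      · intro s hs
        rw [hIcc i] at hs
        dsimp only
        rw [dotProduct_add, dotProduct_add, dotProduct_smul,
          dotProduct_smul, dot_sum, smul_eq_mul, smul_eq_mul]
        congr 1
        refine Finset.sum_congr rfl fun j _ => ?_
        rw [dotProduct_comm, intervalIntegral_dot (ψ i s)
          ((contOn_mulVec (hRslice i j s hs) (hφ j)).intervalIntegrable_of_Icc (hle j))]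
        exact intervalIntegral.integral_congr fun θ _ => dotProduct_comm _ _
    rw [h1, Finset.sum_congr rfl fun i _ => h2 i, Finset.sum_add_distrib,
      Finset.sum_add_distrib]
    ring
  rw [EL, ER]
  -- match the five groups of terms
  have e1 : P.mulVec y ⬝ᵥ x = y ⬝ᵥ P.mulVec x := by rw [dot_shift, hPsym]
  have e2 : ∀ i, (∫ s in (-(τ i))..0, ((Q i s).mulVec (ψ i s) ⬝ᵥ x))
      = ∫ s in (-(τ i))..0, (ψ i s ⬝ᵥ (Q i s)ᵀ.mulVec x) := by
    intro i; exact intervalIntegral.integral_congr fun s _ => dot_shift _ _ _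
  have e3 : ∀ i, (∫ s in (-(τ i))..0, ((Q i s)ᵀ.mulVec y ⬝ᵥ φ i s))
      = ∫ s in (-(τ i))..0, (y ⬝ᵥ (Q i s).mulVec (φ i s)) := by
    intro i
    exact intervalIntegral.integral_congr fun s _ => by rw [dot_shift, Matrix.transpose_transpose]
  have e4 : ∀ i, (∫ s in (-(τ i))..0, ((S i s).mulVec (ψ i s) ⬝ᵥ φ i s))
      = ∫ s in (-(τ i))..0, (ψ i s ⬝ᵥ (S i s).mulVec (φ i s)) := by
    intro i
    apply intervalIntegral.integral_congr
    intro s hs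
    rw [hIcc i] at hs
    dsimp only
    rw [dot_shift, hSsym i s hs]
  have e5 : (∑ i, ∑ j, ∫ s in (-(τ i))..0, ∫ θ in (-(τ j))..0,
        ((R i j s θ).mulVec (ψ j θ) ⬝ᵥ φ i s))
      = ∑ i, ∑ j, ∫ s in (-(τ i))..0, ∫ θ in (-(τ j))..0,
        (ψ i s ⬝ᵥ (R i j s θ).mulVec (φ j θ)) := by
    have key : ∀ i j, (∫ s in (-(τ i))..0, ∫ θ in (-(τ j))..0,
        ((R i j s θ).mulVec (ψ j θ) ⬝ᵥ φ i s))
        = ∫ s in (-(τ j))..0, ∫ θ in (-(τ i))..0,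
            (ψ j s ⬝ᵥ (R j i s θ).mulVec (φ i θ)) := by
      intro i j
      have step1 : (∫ s in (-(τ i))..0, ∫ θ in (-(τ j))..0,
          ((R i j s θ).mulVec (ψ j θ) ⬝ᵥ φ i s))
          = ∫ s in (-(τ i))..0, ∫ θ in (-(τ j))..0,
              (ψ j θ ⬝ᵥ (R j i θ s).mulVec (φ i s)) := by
        apply intervalIntegral.integral_congr
        intro s hs
        rw [hIcc i] at hs
        apply intervalIntegral.integral_congr
        intro θ hθ
        rw [hIcc j] at hθ
        dsimp only
        rw [hRsym i j s hs θ hθ, dot_shift, Matrix.transpose_transpose]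
      rw [step1]
      exact swap_double (hle i) (hle j) (integrableOn_of_contOn (contOn_dot
        ((hψ j).comp continuous_snd.continuousOn (fun p hp => hp.2))
        (contOn_mulVec ((hRc j i).comp (continuous_snd.prodMk continuous_fst).continuousOn
            (fun p hp => Set.mk_mem_prod hp.2 hp.1))
          ((hφ i).comp continuous_fst.continuousOn (fun p hp => hp.1)))))
    calc (∑ i, ∑ j, ∫ s in (-(τ i))..0, ∫ θ in (-(τ j))..0,
          ((R i j s θ).mulVec (ψ j θ) ⬝ᵥ φ i s))
        = ∑ i, ∑ j, ∫ s in (-(τ j))..0, ∫ θ in (-(τ i))..0,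
            (ψ j s ⬝ᵥ (R j i s θ).mulVec (φ i θ)) := by
          exact Finset.sum_congr rfl fun i _ => Finset.sum_congr rfl fun j _ => key i j
      _ = ∑ j, ∑ i, ∫ s in (-(τ j))..0, ∫ θ in (-(τ i))..0,
            (ψ j s ⬝ᵥ (R j i s θ).mulVec (φ i θ)) := Finset.sum_comm
  have E2 : (∑ i, τK * ∫ s in (-(τ i))..0, ((Q i s).mulVec (ψ i s) ⬝ᵥ x))
      = ∑ i, τK * ∫ s in (-(τ i))..0, (ψ i s ⬝ᵥ (Q i s)ᵀ.mulVec x) :=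
    Finset.sum_congr rfl fun i _ => by rw [e2 i]
  have E3 : (∑ i, τK * ∫ s in (-(τ i))..0, ((Q i s)ᵀ.mulVec y ⬝ᵥ φ i s))
      = ∑ i, τK * ∫ s in (-(τ i))..0, (y ⬝ᵥ (Q i s).mulVec (φ i s)) :=
    Finset.sum_congr rfl fun i _ => by rw [e3 i]
  have E4 : (∑ i, τK * ∫ s in (-(τ i))..0, ((S i s).mulVec (ψ i s) ⬝ᵥ φ i s))
      = ∑ i, τK * ∫ s in (-(τ i))..0, (ψ i s ⬝ᵥ (S i s).mulVec (φ i s)) :=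
    Finset.sum_congr rfl fun i _ => by rw [e4 i]
  rw [e1, E2, E3, E4, e5]
end

section
/- (Pointwise dissipation of the estimation-error storage function.) Let Z be a real Hilbert space, X a linear subspace of Z, A : X → Z a linear map, B₁ : ℝ^r → Z a continuous linear map, C₂ : X → ℝ^q a linear map, D₂ : ℝ^r → ℝ^q a linear map. Let P₂ : Z → Z be continuous, self-adjoint, and coercive, 𝒵 : ℝ^q → Z continuous linear, and L : ℝ^q → Z continuous linear with P₂(Lv) = 𝒵v for all v ∈ ℝ^q. Assume there exist ε₂ > 0 and γ₂ > 0 such that for all e ∈ X and ω ∈ ℝ^r: 2⟨P₂(Ae) + 𝒵(C₂e), e⟩ − 2⟨P₂(B₁ω) + 𝒵(D₂ω), e⟩ − γ₂‖ω‖² ≤ −ε₂‖e‖². Let ω : [0,∞) → ℝ^r, let e : [0,∞) → Z be differentiable at t ≥ 0 with e(t) ∈ X and de/dt(t) = A(e(t)) + L(C₂(e(t))) − B₁(ω(t)) − L(D₂(ω(t))). Then the function V₂(s) := ⟨e(s), P₂(e(s))⟩ is differentiable at t and V₂′(t) ≤ γ₂‖ω(t)‖² − ε₂‖e(t)‖².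 -/
open RealInnerProductSpace

/-- (Pointwise dissipation of the estimation-error storage function.)
Along the error dynamics, `V₂(s) = ⟨e(s), P₂ e(s)⟩` is differentiable at `t` with
`V₂'(t) ≤ γ₂‖ω(t)‖² − ε₂‖e(t)‖²`. -/
theorem estimation_error_storage_dissipation
    {Z : Type*} [NormedAddCommGroup Z] [InnerProductSpace ℝ Z] [CompleteSpace Z]
    (X : Submodule ℝ Z) {r q : ℕ}
    (A : X →ₗ[ℝ] Z)
    (B₁ : EuclideanSpace ℝ (Fin r) →L[ℝ] Z)
    (C₂ : X →ₗ[ℝ] EuclideanSpace ℝ (Fin q))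
    (D₂ : EuclideanSpace ℝ (Fin r) →ₗ[ℝ] EuclideanSpace ℝ (Fin q))
    (P₂ : Z →L[ℝ] Z)
    (hP₂sa : ∀ x y : Z, ⟪P₂ x, y⟫ = ⟪x, P₂ y⟫)
    (hP₂coer : ∃ ε > 0, ∀ x : Z, ⟪x, P₂ x⟫ ≥ ε * ‖x‖ ^ 2)
    (𝒵 : EuclideanSpace ℝ (Fin q) →L[ℝ] Z) (L : EuclideanSpace ℝ (Fin q) →L[ℝ] Z)
    (hL : ∀ v, P₂ (L v) = 𝒵 v)
    (ε₂ γ₂ : ℝ) (hε₂ : 0 < ε₂) (hγ₂ : 0 < γ₂)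
    (hdiss : ∀ (e : X) (ω : EuclideanSpace ℝ (Fin r)),
      2 * ⟪P₂ (A e) + 𝒵 (C₂ e), (e : Z)⟫ - 2 * ⟪P₂ (B₁ ω) + 𝒵 (D₂ ω), (e : Z)⟫
        - γ₂ * ‖ω‖ ^ 2 ≤ -ε₂ * ‖(e : Z)‖ ^ 2)
    (ω : ℝ → EuclideanSpace ℝ (Fin r)) (e : ℝ → Z)
    (t : ℝ) (ht : 0 ≤ t) (hm : e t ∈ X)
    (hder : HasDerivAt e
      (A ⟨e t, hm⟩ + L (C₂ ⟨e t, hm⟩) - B₁ (ω t) - L (D₂ (ω t))) t) :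
    DifferentiableAt ℝ (fun s => ⟪e s, P₂ (e s)⟫) t ∧
    deriv (fun s => ⟪e s, P₂ (e s)⟫) t ≤ γ₂ * ‖ω t‖ ^ 2 - ε₂ * ‖e t‖ ^ 2 := by
  set e' := A ⟨e t, hm⟩ + L (C₂ ⟨e t, hm⟩) - B₁ (ω t) - L (D₂ (ω t)) with he'
  have hPe : HasDerivAt (fun s => P₂ (e s)) (P₂ e') t := P₂.hasFDerivAt.comp_hasDerivAt t hder
  have hV : HasDerivAt (fun s => ⟪e s, P₂ (e s)⟫) (⟪e t, P₂ e'⟫ + ⟪e', P₂ (e t)⟫) t :=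
    hder.inner ℝ hPe
  refine ⟨hV.differentiableAt, ?_⟩
  rw [hV.deriv]
  have key : ⟪e t, P₂ e'⟫ + ⟪e', P₂ (e t)⟫ = 2 * ⟪P₂ e', e t⟫ := by
    have h1 : ⟪e t, P₂ e'⟫ = ⟪P₂ e', e t⟫ := real_inner_comm _ _
    have h2 : ⟪e', P₂ (e t)⟫ = ⟪P₂ e', e t⟫ := (hP₂sa e' (e t)).symm
    rw [h1, h2]; ring
  rw [key]
  have hexp : P₂ e' = (P₂ (A ⟨e t, hm⟩) + 𝒵 (C₂ ⟨e t, hm⟩))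
      - (P₂ (B₁ (ω t)) + 𝒵 (D₂ (ω t))) := by
    simp [he', map_sub, map_add, hL]
    abel
  have h := hdiss ⟨e t, hm⟩ (ω t)
  rw [hexp]
  rw [inner_sub_left]
  have : 2 * (⟪P₂ (A ⟨e t, hm⟩) + 𝒵 (C₂ ⟨e t, hm⟩), e t⟫
      - ⟪P₂ (B₁ (ω t)) + 𝒵 (D₂ (ω t)), e t⟫)
      = (2 * ⟪P₂ (A ⟨e t, hm⟩) + 𝒵 (C₂ ⟨e t, hm⟩), ((⟨e t, hm⟩ : X) : Z)⟫
        - 2 * ⟪P₂ (B₁ (ω t)) + 𝒵 (D₂ (ω t)), ((⟨e t, hm⟩ : X) : Z)⟫) := by ring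
  rw [this]
  linarith [h]
end

section
/- (Pointwise dissipation of the plant storage function with estimation-error cross term.) Let Z be a real Hilbert space, X a linear subspace of Z, A : X → Z a linear map, B₁ : ℝ^r → Z, B₂ : ℝ^m → Z continuous linear maps, C₁ : X → ℝ^p, H : X → ℝ^m linear maps, D₁ : ℝ^r → ℝ^p a linear map. Let P₁ : Z → Z be continuous, self-adjoint, coercive, map X into X with P₁(X) = X, and let P₁⁻¹ denote its (continuous, self-adjoint) inverse, which maps X into X. Assume there exist ε₁ > 0 and γ₁ > 0 such that for all h ∈ X, ω ∈ ℝ^r, υ ∈ ℝ^p: 2⟨A(P₁h) + B₂(Hh) + B₁ω, h⟩ − γ₁‖ω‖² − γ₁‖υ‖² + 2υᵀ(C₁(P₁h) + D₁ω) ≤ −ε₁‖h‖². Let ω : [0,∞) → ℝ^r, let e : [0,∞) → Z with e(t) ∈ X, and let x : [0,∞) → Z be differentiable at t ≥ 0 with x(t) ∈ X and dx/dt(t) = A(x(t)) + B₂(H(P₁⁻¹x(t))) + B₂(H(P₁⁻¹e(t))) + B₁(ω(t)). Set h(t) = P₁⁻¹x(t) and z(t) = C₁(x(t)) + D₁(ω(t)).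 Then V₁(s) := ⟨x(s), P₁⁻¹(x(s))⟩ is differentiable at t and V₁′(t) ≤ −ε₁‖h(t)‖² + γ₁‖ω(t)‖² − (1/γ₁)‖z(t)‖² + 2⟨B₂(H(P₁⁻¹e(t))), h(t)⟩. -/
open RealInnerProductSpace

/-!
Since `P₁⁻¹` is self-adjoint, `V₁'(t) = 2⟪ẋ(t), h(t)⟫`, and `x(t) = P₁ h(t)`. The
dissipation inequality at `h = h(t)`, `ω = ω(t)` and the maximising choice `υ = γ₁⁻¹ z(t)` of the
free output variable, for which `2⟪υ, z⟫ - γ₁‖υ‖² = γ₁⁻¹‖z‖²`, bounds `2⟪ẋ(t), h(t)⟫` except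
for the estimation-error term of `ẋ(t)`, which is kept as the cross term.
-/

theorem HasDerivAt.inner_map_self_of_isSymmetric {E : Type*} [NormedAddCommGroup E]
    [InnerProductSpace ℝ E] {T : E →L[ℝ] E} (hT : (T : E →ₗ[ℝ] E).IsSymmetric)
    {x : ℝ → E} {x' : E} {t : ℝ} (hx : HasDerivAt x x' t) :
    HasDerivAt (fun s => ⟪x s, T (x s)⟫) (2 * ⟪x', T (x t)⟫) t := by
  have hTx : HasDerivAt (fun s => T (x s)) (T x') t := T.hasFDerivAt.comp_hasDerivAt t hx
  refine (hx.inner ℝ hTx).congr_deriv ?_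
  rw [two_mul, real_inner_comm]
  exact congrArg (· + _) (hT x' (x t))

theorem two_inner_inv_smul_sub_mul_norm_inv_smul_sq {F : Type*} [NormedAddCommGroup F]
    [InnerProductSpace ℝ F] (γ : ℝ) (z : F) :
    2 * ⟪γ⁻¹ • z, z⟫ - γ * ‖γ⁻¹ • z‖ ^ 2 = γ⁻¹ * ‖z‖ ^ 2 := by
  rw [real_inner_smul_left, real_inner_self_eq_norm_sq, norm_smul, mul_pow,
    Real.norm_eq_abs, sq_abs]
  rcases eq_or_ne γ 0 with rfl | hγ
  · simp
  · field_simp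
    ring

theorem plant_storage_dissipation_with_cross_term_general
    {Z : Type*} [NormedAddCommGroup Z] [InnerProductSpace ℝ Z]
    (X : Submodule ℝ Z) {r m p : ℕ}
    (A : X →ₗ[ℝ] Z)
    (B₁ : EuclideanSpace ℝ (Fin r) →L[ℝ] Z) (B₂ : EuclideanSpace ℝ (Fin m) →L[ℝ] Z)
    (C₁ : X →ₗ[ℝ] EuclideanSpace ℝ (Fin p)) (H : X →ₗ[ℝ] EuclideanSpace ℝ (Fin m))
    (D₁ : EuclideanSpace ℝ (Fin r) →ₗ[ℝ] EuclideanSpace ℝ (Fin p))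
    (P₁ Pinv : Z →L[ℝ] Z)
    (hP₁X : ∀ x ∈ X, P₁ x ∈ X)
    (hinv2 : ∀ x, P₁ (Pinv x) = x)
    (hPinvsa : ∀ x y : Z, ⟪Pinv x, y⟫ = ⟪x, Pinv y⟫)
    (hPinvX : ∀ x ∈ X, Pinv x ∈ X)
    (ε₁ γ₁ : ℝ)
    (hdiss : ∀ (h : X) (ω : EuclideanSpace ℝ (Fin r)) (υ : EuclideanSpace ℝ (Fin p)),
      2 * ⟪A ⟨P₁ (h : Z), hP₁X (h : Z) h.2⟩ + B₂ (H h) + B₁ ω, (h : Z)⟫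
        - γ₁ * ‖ω‖ ^ 2 - γ₁ * ‖υ‖ ^ 2
        + 2 * ⟪υ, C₁ ⟨P₁ (h : Z), hP₁X (h : Z) h.2⟩ + D₁ ω⟫
      ≤ -ε₁ * ‖(h : Z)‖ ^ 2)
    (ω : ℝ → EuclideanSpace ℝ (Fin r)) (e : ℝ → Z) (x : ℝ → Z)
    (t : ℝ) (hmx : x t ∈ X) (hme : e t ∈ X)
    (hder : HasDerivAt x
      (A ⟨x t, hmx⟩ + B₂ (H ⟨Pinv (x t), hPinvX (x t) hmx⟩)
        + B₂ (H ⟨Pinv (e t), hPinvX (e t) hme⟩) + B₁ (ω t)) t) :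
    DifferentiableAt ℝ (fun s => ⟪x s, Pinv (x s)⟫) t ∧
    deriv (fun s => ⟪x s, Pinv (x s)⟫) t
      ≤ -ε₁ * ‖Pinv (x t)‖ ^ 2 + γ₁ * ‖ω t‖ ^ 2
        - (1 / γ₁) * ‖C₁ ⟨x t, hmx⟩ + D₁ (ω t)‖ ^ 2
        + 2 * ⟪B₂ (H ⟨Pinv (e t), hPinvX (e t) hme⟩), Pinv (x t)⟫ := by
  have hV := hder.inner_map_self_of_isSymmetric (T := Pinv) hPinvsa
  refine ⟨hV.differentiableAt, hV.deriv.le.trans ?_⟩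
  set z := C₁ ⟨x t, hmx⟩ + D₁ (ω t)
  have hPh : (⟨P₁ (Pinv (x t)), hP₁X _ (hPinvX (x t) hmx)⟩ : X) = ⟨x t, hmx⟩ :=
    Subtype.ext (hinv2 _)
  have hd := hdiss ⟨Pinv (x t), hPinvX (x t) hmx⟩ (ω t) (γ₁⁻¹ • z)
  rw [hPh] at hd
  have hsq := two_inner_inv_smul_sub_mul_norm_inv_smul_sq γ₁ z
  simp only [inner_add_left] at hd ⊢
  rw [one_div]
  linarith

/-- (Pointwise dissipation of the plant storage function with
estimation-error cross term.)  Along the closed-loop plant dynamics driven by the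
controller `u = H(P₁⁻¹(x+e))`, the storage function `V₁(s) = ⟨x(s), P₁⁻¹ x(s)⟩` is
differentiable at `t` with
`V₁'(t) ≤ −ε₁‖h(t)‖² + γ₁‖ω(t)‖² − (1/γ₁)‖z(t)‖² + 2⟨B₂ H(P₁⁻¹e(t)), h(t)⟩`,
where `h(t) = P₁⁻¹x(t)` and `z(t) = C₁ x(t) + D₁ ω(t)`. -/
theorem plant_storage_dissipation_with_cross_term
    {Z : Type*} [NormedAddCommGroup Z] [InnerProductSpace ℝ Z] [CompleteSpace Z]
    (X : Submodule ℝ Z) {r m p : ℕ}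
    (A : X →ₗ[ℝ] Z)
    (B₁ : EuclideanSpace ℝ (Fin r) →L[ℝ] Z) (B₂ : EuclideanSpace ℝ (Fin m) →L[ℝ] Z)
    (C₁ : X →ₗ[ℝ] EuclideanSpace ℝ (Fin p)) (H : X →ₗ[ℝ] EuclideanSpace ℝ (Fin m))
    (D₁ : EuclideanSpace ℝ (Fin r) →ₗ[ℝ] EuclideanSpace ℝ (Fin p))
    (P₁ Pinv : Z →L[ℝ] Z)
    (hP₁sa : ∀ x y : Z, ⟪P₁ x, y⟫ = ⟪x, P₁ y⟫)
    (hP₁coer : ∃ ε > 0, ∀ x : Z, ⟪x, P₁ x⟫ ≥ ε * ‖x‖ ^ 2)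
    (hP₁X : ∀ x ∈ X, P₁ x ∈ X)
    (hP₁img : ⇑P₁ '' (X : Set Z) = (X : Set Z))
    (hinv1 : ∀ x, Pinv (P₁ x) = x) (hinv2 : ∀ x, P₁ (Pinv x) = x)
    (hPinvsa : ∀ x y : Z, ⟪Pinv x, y⟫ = ⟪x, Pinv y⟫)
    (hPinvX : ∀ x ∈ X, Pinv x ∈ X)
    (ε₁ γ₁ : ℝ) (hε₁ : 0 < ε₁) (hγ₁ : 0 < γ₁)
    (hdiss : ∀ (h : X) (ω : EuclideanSpace ℝ (Fin r)) (υ : EuclideanSpace ℝ (Fin p)),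
      2 * ⟪A ⟨P₁ (h : Z), hP₁X (h : Z) h.2⟩ + B₂ (H h) + B₁ ω, (h : Z)⟫
        - γ₁ * ‖ω‖ ^ 2 - γ₁ * ‖υ‖ ^ 2
        + 2 * ⟪υ, C₁ ⟨P₁ (h : Z), hP₁X (h : Z) h.2⟩ + D₁ ω⟫
      ≤ -ε₁ * ‖(h : Z)‖ ^ 2)
    (ω : ℝ → EuclideanSpace ℝ (Fin r)) (e : ℝ → Z) (x : ℝ → Z)
    (t : ℝ) (ht : 0 ≤ t) (hmx : x t ∈ X) (hme : e t ∈ X)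
    (hder : HasDerivAt x
      (A ⟨x t, hmx⟩ + B₂ (H ⟨Pinv (x t), hPinvX (x t) hmx⟩)
        + B₂ (H ⟨Pinv (e t), hPinvX (e t) hme⟩) + B₁ (ω t)) t) :
    DifferentiableAt ℝ (fun s => ⟪x s, Pinv (x s)⟫) t ∧
    deriv (fun s => ⟪x s, Pinv (x s)⟫) t
      ≤ -ε₁ * ‖Pinv (x t)‖ ^ 2 + γ₁ * ‖ω t‖ ^ 2
        - (1 / γ₁) * ‖C₁ ⟨x t, hmx⟩ + D₁ (ω t)‖ ^ 2
        + 2 * ⟪B₂ (H ⟨Pinv (e t), hPinvX (e t) hme⟩), Pinv (x t)⟫ :=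
  plant_storage_dissipation_with_cross_term_general X A B₁ B₂ C₁ H D₁ P₁ Pinv hP₁X hinv2 hPinvsa
    hPinvX ε₁ γ₁ hdiss ω e x t hmx hme hder
end
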